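/- arXiv:1805.10378 — 3 statements merged into one kernel-verified Lean document; each statement's English description precedes it below -/
import Mathlib

section
/- Under the conditions s ≥ 2·ln(k)·k/r and s | k, if T is a uniformly random r-subset of {1,...,k} partitioned into k/s blocks of size s, then with probability at least 1 - 1/k every block contains at least one element of T. -/
open scoped ENNReal

open Finset in
private lemma stmt4_key_nat (k s r : ℕ) (hk : 2 ≤ k) (hs : 0 < s) (hr : 0 < r)
    (hdvd : s ∣ k) (hrk : r ≤ k)
    (hbig : (s : ℝ) ≥ 2 * Real.log k * k / r) :
    k * (k / s * (k - s).choose r) ≤ k.choose r := by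
  have hsk : s ≤ k := Nat.le_of_dvd (by omega) hdvd
  set M := (k - s).choose r with hM
  set N := k.choose r with hN
  -- descending factorial inequality
  have hD : (k - s).descFactorial r * k ^ r ≤ k.descFactorial r * (k - s) ^ r := by
    rw [Nat.descFactorial_eq_prod_range, Nat.descFactorial_eq_prod_range]
    calc (∏ j ∈ range r, (k - s - j)) * k ^ r
        = ∏ j ∈ range r, ((k - s - j) * k) := by
          rw [Finset.prod_mul_distrib, Finset.prod_const, Finset.card_range]
      _ ≤ ∏ j ∈ range r, ((k - j) * (k - s)) := by
          apply Finset.prod_le_prod' 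
          intro j hj
          rcases le_or_gt k (s + j) with h | h
          · have : k - s - j = 0 := by omega
            simp [this]
          · obtain ⟨t, ht⟩ : ∃ t, k = s + j + t := ⟨k - s - j, by omega⟩
            have h1 : k - s - j = t := by omega
            have h2 : k - j = s + t := by omega
            have h3 : k - s = j + t := by omega
            rw [h1, h2, h3, ht]; nlinarith
      _ = (∏ j ∈ range r, (k - j)) * (k - s) ^ r := by
          rw [Finset.prod_mul_distrib, Finset.prod_const, Finset.card_range]
  have hC : M * k ^ r ≤ N * (k - s) ^ r := by
    have := hD
    rw [Nat.descFactorial_eq_factorial_mul_choose, Nat.descFactorial_eq_factorial_mul_choose]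
      at this
    refine Nat.le_of_mul_le_mul_left ?_ (Nat.factorial_pos r)
    calc r.factorial * (M * k ^ r) = r.factorial * M * k ^ r := by ring
      _ ≤ r.factorial * N * (k - s) ^ r := this
      _ = r.factorial * (N * (k - s) ^ r) := by ring
  -- real versions
  have hk0 : (0:ℝ) < k := by positivity
  have hs0 : (0:ℝ) < s := by positivity
  have hr0 : (0:ℝ) < r := by positivity
  have hCR : (M : ℝ) ≤ N * (((k:ℝ) - s) / k) ^ r := by
    have h := hC
    have : (M : ℝ) * (k:ℝ) ^ r ≤ (N:ℝ) * ((k:ℝ) - s) ^ r := by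
      have := (Nat.cast_le (α := ℝ)).mpr h
      push_cast [Nat.cast_sub hsk] at this
      exact this
    rw [div_pow, ← mul_div_assoc, le_div_iff₀ (by positivity)]
    linarith
  have hfrac : (((k:ℝ) - s) / k) ^ r ≤ ((k:ℝ)^2)⁻¹ := by
    have h1 : ((k:ℝ) - s) / k ≤ Real.exp (-(s / k)) := by
      have := Real.add_one_le_exp (-(s / k : ℝ))
      have e : ((k:ℝ) - s)/k = -(s/k) + 1 := by field_simp; ring
      rw [e]; exact this
    have h0 : (0:ℝ) ≤ ((k:ℝ) - s)/k := by
      apply div_nonneg _ hk0.le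
      have : (s:ℝ) ≤ k := by exact_mod_cast hsk
      linarith
    calc (((k:ℝ) - s)/k) ^ r ≤ Real.exp (-(s/k)) ^ r := pow_le_pow_left₀ h0 h1 r
      _ = Real.exp (r * -(s/k)) := (Real.exp_nat_mul _ r).symm
      _ ≤ Real.exp (-(2 * Real.log k)) := by
          apply Real.exp_le_exp.mpr
          have hb : 2 * Real.log k * k ≤ s * r := by
            rw [ge_iff_le, div_le_iff₀ hr0] at hbig; linarith
          have h2 : 2 * Real.log k ≤ s * r / k := by
            rw [le_div_iff₀ hk0]; linarith
          have h3 : (r:ℝ) * -(s / k) = -(s * r / k) := by ring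
          rw [h3]; linarith
      _ = ((k:ℝ)^2)⁻¹ := by
          rw [Real.exp_neg]
          congr 1
          rw [show (2:ℝ) * Real.log k = Real.log ((k:ℝ)^2) by
            rw [Real.log_pow]; norm_num]
          exact Real.exp_log (by positivity)
  have hMN : (M : ℝ) ≤ N * ((k:ℝ)^2)⁻¹ := by
    calc (M:ℝ) ≤ N * (((k:ℝ) - s)/k)^r := hCR
      _ ≤ N * ((k:ℝ)^2)⁻¹ := by
          apply mul_le_mul_of_nonneg_left hfrac (by positivity)
  rw [← Nat.cast_le (α := ℝ)]
  push_cast [Nat.cast_div hdvd (show (s:ℝ) ≠ 0 by positivity)]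
  have hs1 : (1:ℝ) ≤ s := by exact_mod_cast hs
  calc (k:ℝ) * ((k:ℝ)/s * M) ≤ (k:ℝ) * ((k:ℝ)/s * (N * ((k:ℝ)^2)⁻¹)) := by
        gcongr
    _ = N / s := by field_simp
    _ ≤ N := div_le_self (by positivity) hs1

set_option maxHeartbeats 1000000 in
/-- If `s ≥ 2 ln(k) k / r`, a uniformly random `r`-subset of `{1,…,k}` meets every
block `S_i = {(i-1)s+1,…,is}` with probability at least `1 - 1/k`. -/
theorem stmt_4 (k s r : ℕ) (hk : 2 ≤ k) (hs : 0 < s) (hr : 0 < r)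
    (hdvd : s ∣ k) (hrk : r ≤ k)
    (hbig : (s : ℝ) ≥ 2 * Real.log k * k / r)
    (hne : ((Finset.Icc 1 k).powersetCard r).Nonempty) :
    (PMF.uniformOfFinset _ hne).toOuterMeasure
        {T : Finset ℕ | ∀ i ∈ Finset.range (k / s),
          (Finset.Icc (i * s + 1) ((i + 1) * s) ∩ T).Nonempty} ≥
      1 - (k : ℝ≥0∞)⁻¹ := by
  classical
  rw [PMF.toOuterMeasure_uniformOfFinset_apply]
  set Ω := (Finset.Icc 1 k).powersetCard r with hΩ
  have hΩcard : Ω.card = k.choose r := by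
    rw [hΩ, Finset.card_powersetCard, Nat.card_Icc]
    norm_num
  set P : Finset ℕ → Prop := fun T => ∀ i ∈ Finset.range (k / s),
      (Finset.Icc (i * s + 1) ((i + 1) * s) ∩ T).Nonempty with hP
  simp only [Set.mem_setOf_eq, Finset.filter_congr_decidable]
  -- bound on the bad count
  set M := (k - s).choose r with hM
  have hterm : ∀ i ∈ Finset.range (k / s),
      (Ω.filter fun T => Finset.Icc (i * s + 1) ((i + 1) * s) ∩ T = ∅).card ≤ M := by
    intro i hi
    have hi' : i + 1 ≤ k / s := Finset.mem_range.mp hi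
    have hblk : Finset.Icc (i * s + 1) ((i + 1) * s) ⊆ Finset.Icc 1 k := by
      intro x hx
      rw [Finset.mem_Icc] at hx ⊢
      have h1 : (i + 1) * s ≤ k / s * s := Nat.mul_le_mul_right s hi'
      rw [Nat.div_mul_cancel hdvd] at h1
      omega
    have hsub : (Ω.filter fun T => Finset.Icc (i * s + 1) ((i + 1) * s) ∩ T = ∅) ⊆
        ((Finset.Icc 1 k) \ Finset.Icc (i * s + 1) ((i + 1) * s)).powersetCard r := by
      intro T hT
      rw [Finset.mem_filter] at hT
      obtain ⟨hT1, hT2⟩ := hT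
      rw [hΩ, Finset.mem_powersetCard] at hT1
      rw [Finset.mem_powersetCard]
      refine ⟨fun x hx => ?_, hT1.2⟩
      rw [Finset.mem_sdiff]
      refine ⟨hT1.1 hx, fun hblkx => ?_⟩
      have : x ∈ Finset.Icc (i * s + 1) ((i + 1) * s) ∩ T :=
        Finset.mem_inter.mpr ⟨hblkx, hx⟩
      rw [hT2] at this
      exact absurd this (Finset.notMem_empty x)
    calc (Ω.filter fun T => Finset.Icc (i * s + 1) ((i + 1) * s) ∩ T = ∅).card
        ≤ (((Finset.Icc 1 k) \ Finset.Icc (i * s + 1) ((i + 1) * s)).powersetCard r).card :=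
          Finset.card_le_card hsub
      _ = M := by
          rw [Finset.card_powersetCard, Finset.card_sdiff_of_subset hblk, Nat.card_Icc, Nat.card_Icc]
          congr 1
          have : (i + 1) * s = i * s + s := by ring
          omega
  have hbad : (Ω.filter fun T => ¬ P T).card ≤ k / s * M := by
    have hsub : (Ω.filter fun T => ¬ P T) ⊆ (Finset.range (k / s)).biUnion
        (fun i => Ω.filter fun T => Finset.Icc (i * s + 1) ((i + 1) * s) ∩ T = ∅) := by
      intro T hT
      rw [Finset.mem_filter] at hT
      obtain ⟨hT1, hT2⟩ := hT
      simp only [hP, not_forall] at hT2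
      obtain ⟨i, hi, hne'⟩ := hT2
      rw [Finset.not_nonempty_iff_eq_empty] at hne'
      exact Finset.mem_biUnion.mpr ⟨i, hi, Finset.mem_filter.mpr ⟨hT1, hne'⟩⟩
    calc (Ω.filter fun T => ¬ P T).card
        ≤ ((Finset.range (k / s)).biUnion _).card := Finset.card_le_card hsub
      _ ≤ ∑ i ∈ Finset.range (k / s),
            (Ω.filter fun T => Finset.Icc (i * s + 1) ((i + 1) * s) ∩ T = ∅).card :=
          Finset.card_biUnion_le
      _ ≤ ∑ _i ∈ Finset.range (k / s), M := Finset.sum_le_sum hterm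
      _ = k / s * M := by rw [Finset.sum_const, Finset.card_range, smul_eq_mul]
  have hsplit : (Ω.filter P).card + (Ω.filter fun T => ¬ P T).card = Ω.card :=
    by
    have := Finset.card_filter_add_card_filter_not (s := Ω) (p := P)
    convert this using 3
  have hkey : k * (k / s * M) ≤ k.choose r := stmt4_key_nat k s r hk hs hr hdvd hrk hbig
  -- ENNReal conclusion
  have hN0 : ((Ω.card : ℝ≥0∞)) ≠ 0 :=
    Nat.cast_ne_zero.mpr (Finset.card_ne_zero.mpr hne)
  have hNt : ((Ω.card : ℝ≥0∞)) ≠ ∞ := ENNReal.natCast_ne_top _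
  have hk0 : ((k : ℝ≥0∞)) ≠ 0 := by
    simp; omega
  have hkt : ((k : ℝ≥0∞)) ≠ ∞ := ENNReal.natCast_ne_top _
  have hBdiv : ((k / s * M : ℕ) : ℝ≥0∞) / (Ω.card : ℝ≥0∞) ≤ (k : ℝ≥0∞)⁻¹ := by
    rw [ENNReal.div_le_iff hN0 hNt]
    rw [← ENNReal.div_eq_inv_mul, ENNReal.le_div_iff_mul_le (Or.inl hk0) (Or.inl hkt)]
    rw [mul_comm]
    calc (k : ℝ≥0∞) * ((k / s * M : ℕ) : ℝ≥0∞) = ((k * (k / s * M) : ℕ) : ℝ≥0∞) := by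
          push_cast; ring
      _ ≤ ((k.choose r : ℕ) : ℝ≥0∞) := Nat.cast_le.mpr hkey
      _ = (Ω.card : ℝ≥0∞) := by rw [hΩcard]
  have hbad' : ((Ω.filter fun T => ¬ P T).card : ℝ≥0∞) / (Ω.card : ℝ≥0∞) ≤ (k : ℝ≥0∞)⁻¹ := by
    refine le_trans ?_ hBdiv
    apply ENNReal.div_le_div_right
    exact_mod_cast hbad
  rw [ge_iff_le]
  have hfinal : 1 - (k : ℝ≥0∞)⁻¹ ≤ ((Ω.filter P).card : ℝ≥0∞) / (Ω.card : ℝ≥0∞) :=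
    calc 1 - (k : ℝ≥0∞)⁻¹
      ≤ 1 - ((Ω.filter fun T => ¬ P T).card : ℝ≥0∞) / (Ω.card : ℝ≥0∞) :=
        tsub_le_tsub_left hbad' 1
    _ ≤ ((Ω.filter P).card : ℝ≥0∞) / (Ω.card : ℝ≥0∞) := by
        rw [tsub_le_iff_right]
        have : (1 : ℝ≥0∞) = (Ω.card : ℝ≥0∞) / (Ω.card : ℝ≥0∞) :=
          (ENNReal.div_self hN0 hNt).symm
        rw [this, ← ENNReal.add_div]
        apply ENNReal.div_le_div_right
        rw [← Nat.cast_add]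
        exact_mod_cast hsplit.ge
  convert hfinal using 4
end

section
/- For the fractional repetition code with k tasks, k workers, and s tasks per worker (s | k), whose assignment matrix G is block diagonal with k/s blocks equal to the s×s all-ones matrix: if the set T of non-straggler columns intersects every block, then there exists a vector v supported on T with G·v = 1_k, i.e., err(v) = ‖Gv - 1_k‖² = 0. -/
/-- Fractional repetition code: block-diagonal matrix with `k/s` all-ones `s × s` blocks.
Column/row `j` belongs to block `(j : ℕ) / s`. -/
theorem stmt_10 (k s : ℕ) (hs : 0 < s) (hk : 0 < k) (hdvd : s ∣ k)
    (G : Matrix (Fin k) (Fin k) ℝ)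
    (hG : ∀ i j : Fin k, G i j = if (i : ℕ) / s = (j : ℕ) / s then 1 else 0)
    (T : Finset (Fin k))
    (hT : ∀ b < k / s, ∃ j ∈ T, (j : ℕ) / s = b) :
    ∃ v : Fin k → ℝ, (∀ j ∉ T, v j = 0) ∧
      ∑ i, (G.mulVec v i - 1) ^ 2 = 0 := by
  classical
  have hblt : ∀ j : Fin k, (j : ℕ) / s < k / s := by
    intro j
    exact Nat.div_lt_div_of_lt_of_dvd hdvd j.isLt
  have : Inhabited (Fin k) := ⟨⟨0, hk⟩⟩
  set g : ℕ → Fin k := fun b => if h : b < k / s then (hT b h).choose else default with hg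
  have hgspec : ∀ b < k / s, g b ∈ T ∧ ((g b : ℕ)) / s = b := by
    intro b hb
    have := (hT b hb).choose_spec
    simp only [hg, dif_pos hb]
    exact this
  refine ⟨fun j => if j = g ((j : ℕ) / s) then 1 else 0, ?_, ?_⟩
  · intro j hj
    by_contra h
    simp only [ite_eq_right_iff, not_forall] at h
    obtain ⟨hj', _⟩ := h
    exact hj (hj' ▸ (hgspec _ (hblt j)).1)
  · have key : ∀ i : Fin k, G.mulVec (fun j => if j = g ((j : ℕ) / s) then 1 else 0) i = 1 := by
      intro i
      rw [Matrix.mulVec, dotProduct]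
      rw [Finset.sum_eq_single (g ((i : ℕ) / s))]
      · have hsp := hgspec _ (hblt i)
        rw [hG, hsp.2, if_pos rfl, if_pos rfl, one_mul]
      · intro j _ hj
        rw [hG]
        by_cases h1 : (i : ℕ) / s = (j : ℕ) / s
        · rw [if_pos h1]
          rw [if_neg, mul_zero]
          intro hc
          exact hj (hc.trans (by rw [← h1]))
        · rw [if_neg h1, zero_mul]
      · intro h; exact absurd (Finset.mem_univ _) h
    simp [key]
end

section
/- (Vector Bernstein corollary) Let v_1,...,v_N be independent random vectors in ℝ^k with ‖v_i - E v_i‖_2 ≤ B almost surely, and let σ² = Σ_i E‖v_i - E v_i‖². Then for any t with 0 ≤ t ≤ σ²/B, P(‖Σ_i (v_i - E v_i)‖_2 > t) ≤ exp(-t²/(8σ²) + 1/4). -/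
/-!
Following Pinelis, control the "moment generating function" `E cosh (L ‖S‖)` of the norm of the
sum `S`. Along a segment, `θ ↦ cosh (L ‖s + θ x‖)` has second derivative at most
`L² ‖x‖² cosh (L ‖s‖) e^{θ L ‖x‖}`, whence
`cosh (L ‖s + x‖) ≤ cosh (L ‖s‖) + ⟪∇, x⟫ + (e^{L ‖x‖} - 1 - L ‖x‖) cosh (L ‖s‖)`.
For a centred summand with `L ‖x‖ ≤ 1` the linear term integrates to zero and the last term is at
most `3/4 L² ‖x‖² cosh (L ‖s‖)`, so integrating out one independent summand at a time gives
`E cosh (L ‖S‖) ≤ exp (3/4 L² σ²)`. Markov's inequality with `L = t / (2σ²)`, which satisfies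
`L B ≤ 1` because `t ≤ σ² / B`, and an elementary numerical inequality finish the proof when
`t² ≥ 2σ²`; for smaller `t` the bound exceeds `1`.
-/

open Real Set Filter Topology MeasureTheory ProbabilityTheory
open scoped ENNReal

theorem image_le_of_second_deriv_le {f f' f'' g g' g'' : ℝ → ℝ} {a b : ℝ}
    (hf : ∀ x, HasDerivAt f (f' x) x) (hf' : ∀ x, HasDerivAt f' (f'' x) x)
    (hg : ∀ x, HasDerivAt g (g' x) x) (hg' : ∀ x, HasDerivAt g' (g'' x) x)
    (ha : f a ≤ g a) (ha' : f' a ≤ g' a) (hle : ∀ x ∈ Ico a b, f'' x ≤ g'' x) :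
    ∀ x ∈ Icc a b, f x ≤ g x := by
  have cont : ∀ {φ φ' : ℝ → ℝ}, (∀ x, HasDerivAt φ (φ' x) x) → ContinuousOn φ (Icc a b) :=
    fun h => HasDerivAt.continuousOn fun x _ => h x
  have hle' : ∀ x ∈ Icc a b, f' x ≤ g' x :=
    image_le_of_deriv_right_le_deriv_boundary (cont hf') (fun x _ => (hf' x).hasDerivWithinAt)
      ha' (cont hg') (fun x _ => (hg' x).hasDerivWithinAt) hle
  exact image_le_of_deriv_right_le_deriv_boundary (cont hf) (fun x _ => (hf x).hasDerivWithinAt)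
    ha (cont hg) (fun x _ => (hg x).hasDerivWithinAt) fun x hx => hle' x (Ico_subset_Icc_self hx)

theorem sinh_le_mul_cosh {x : ℝ} (hx : 0 ≤ x) : sinh x ≤ x * cosh x := by
  have hd : ∀ y, HasDerivAt (fun y => y * cosh y) (cosh y + y * sinh y) y := fun y =>
    ((hasDerivAt_id' y).mul (hasDerivAt_cosh y)).congr_deriv (by simp)
  refine image_le_of_deriv_right_le_deriv_boundary (a := 0) (b := x) (f' := cosh)
    (continuous_sinh.continuousOn) (fun y _ => (hasDerivAt_sinh y).hasDerivWithinAt)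
    (by simp) (by fun_prop) (fun y _ => (hd y).hasDerivWithinAt) (fun y hy => ?_)
    ⟨hx, le_rfl⟩
  have := mul_nonneg hy.1 (sinh_nonneg_iff.2 hy.1)
  linarith

theorem cosh_add_le_cosh_mul_exp (x : ℝ) {y : ℝ} (hy : 0 ≤ y) : cosh (x + y) ≤ cosh x * exp y := by
  rw [cosh_add, ← cosh_add_sinh y]
  nlinarith [sinh_lt_cosh x, sinh_nonneg_iff.2 hy]

section QuadraticRoot

variable {a b c : ℝ}

theorem quadratic_pos_of_discrim_neg (hc : 0 < c) (hdisc : b ^ 2 < 4 * a * c) (θ : ℝ) :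
    0 < a * θ ^ 2 + b * θ + c := by
  have ha : 0 < a := by nlinarith [sq_nonneg b]
  nlinarith [sq_nonneg (2 * a * θ + b)]

theorem hasDerivAt_sqrt_quadratic (hc : 0 < c) (hdisc : b ^ 2 < 4 * a * c) (θ : ℝ) :
    HasDerivAt (fun θ => √(a * θ ^ 2 + b * θ + c))
      ((2 * a * θ + b) / (2 * √(a * θ ^ 2 + b * θ + c))) θ := by
  have hq : HasDerivAt (fun θ => a * θ ^ 2 + b * θ + c) (2 * a * θ + b) θ := by
    have := (((hasDerivAt_pow 2 θ).const_mul a).add ((hasDerivAt_id' θ).const_mul b)).add_const c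
    exact this.congr_deriv (by ring)
  exact hq.sqrt (quadratic_pos_of_discrim_neg hc hdisc θ).ne'

theorem hasDerivAt_deriv_sqrt_quadratic (hc : 0 < c) (hdisc : b ^ 2 < 4 * a * c) (θ : ℝ) :
    HasDerivAt (fun θ => (2 * a * θ + b) / (2 * √(a * θ ^ 2 + b * θ + c)))
      ((4 * a * c - b ^ 2) / (4 * √(a * θ ^ 2 + b * θ + c) ^ 3)) θ := by
  have hS := quadratic_pos_of_discrim_neg hc hdisc θ
  have hsq := sq_sqrt hS.le
  have hpos := sqrt_pos.2 hS
  have hnum : HasDerivAt (fun θ => 2 * a * θ + b) (2 * a) θ := by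
    simpa using ((hasDerivAt_id' θ).const_mul (2 * a)).add_const b
  refine (hnum.fun_div ((hasDerivAt_sqrt_quadratic hc hdisc θ).const_mul 2)
    (by positivity)).congr_deriv ?_
  generalize √(a * θ ^ 2 + b * θ + c) = S at hsq hpos ⊢
  field_simp
  rw [hsq]
  ring

theorem sqrt_quadratic_le (ha : 0 ≤ a) (hc : 0 ≤ c) (hdisc : b ^ 2 ≤ 4 * a * c) {θ : ℝ}
    (hθ : 0 ≤ θ) : √(a * θ ^ 2 + b * θ + c) ≤ √c + √a * θ := by
  have hb : b ≤ 2 * (√a * √c) := by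
    by_contra! h
    have := mul_self_lt_mul_self (by positivity) h
    nlinarith [sq_sqrt ha, sq_sqrt hc]
  rw [sqrt_le_left (by positivity)]
  nlinarith [sq_sqrt ha, sq_sqrt hc]

theorem cosh_mul_sqrt_quadratic_le {L : ℝ} (hL : 0 ≤ L) (hc : 0 < c)
    (hdisc : b ^ 2 < 4 * a * c) :
    cosh (L * √(a + b + c)) ≤ cosh (L * √c) + L * b / (2 * √c) * sinh (L * √c)
      + (exp (L * √a) - 1 - L * √a) * cosh (L * √c) := by
  have ha : 0 < a := by nlinarith [sq_nonneg b]
  set S : ℝ → ℝ := fun θ => √(a * θ ^ 2 + b * θ + c)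
  set S' : ℝ → ℝ := fun θ => (2 * a * θ + b) / (2 * S θ)
  set S'' : ℝ → ℝ := fun θ => (4 * a * c - b ^ 2) / (4 * S θ ^ 3)
  have hSpos θ : 0 < S θ := sqrt_pos.2 (quadratic_pos_of_discrim_neg hc hdisc θ)
  have hS0 : S 0 = √c := by simp [S]
  -- `S ^ 2` is the quadratic, so differentiating it twice gives `S' ^ 2 + S * S'' = a`.
  have hSS θ : S' θ ^ 2 + S θ * S'' θ = a := by
    have hsq : S θ ^ 2 = a * θ ^ 2 + b * θ + c :=
      sq_sqrt (quadratic_pos_of_discrim_neg hc hdisc θ).le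
    have := hSpos θ
    simp only [S', S'']
    field_simp
    rw [hsq]
    ring
  set K := cosh (L * √c)
  set m := L * √a
  have hm0 : 0 ≤ m := mul_nonneg hL (sqrt_nonneg a)
  have hf θ : HasDerivAt (fun θ => cosh (L * S θ)) (sinh (L * S θ) * (L * S' θ)) θ :=
    ((hasDerivAt_sqrt_quadratic hc hdisc θ).const_mul L).cosh
  have hf' θ : HasDerivAt (fun θ => sinh (L * S θ) * (L * S' θ))
      (cosh (L * S θ) * (L * S' θ) * (L * S' θ) + sinh (L * S θ) * (L * S'' θ)) θ :=
    ((hasDerivAt_sqrt_quadratic hc hdisc θ).const_mul L).sinh.mul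
      ((hasDerivAt_deriv_sqrt_quadratic hc hdisc θ).const_mul L)
  have hexp θ : HasDerivAt (fun θ => exp (m * θ)) (exp (m * θ) * m) θ := by
    simpa using ((hasDerivAt_id' θ).const_mul m).exp
  have hg θ : HasDerivAt (fun θ => K + θ * (L * b / (2 * √c) * sinh (L * √c))
      + (exp (m * θ) - 1 - m * θ) * K) (L * b / (2 * √c) * sinh (L * √c)
      + (exp (m * θ) * m - m) * K) θ := by
    have := (((hasDerivAt_id' θ).mul_const (L * b / (2 * √c) * sinh (L * √c))).const_add K).add
      ((((hexp θ).sub_const 1).sub ((hasDerivAt_id' θ).const_mul m)).mul_const K)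
    exact this.congr_deriv (by ring)
  have hg' θ : HasDerivAt (fun θ => L * b / (2 * √c) * sinh (L * √c) + (exp (m * θ) * m - m) * K)
      (exp (m * θ) * m * m * K) θ := by
    simpa using ((((hexp θ).mul_const m).sub_const m).mul_const K).const_add
      (L * b / (2 * √c) * sinh (L * √c))
  have hle θ (hθ : θ ∈ Ico (0 : ℝ) 1) :
      cosh (L * S θ) * (L * S' θ) * (L * S' θ) + sinh (L * S θ) * (L * S'' θ)
        ≤ exp (m * θ) * m * m * K := by
    have hS'' : 0 ≤ S'' θ := by
      have := hSpos θ
      exact div_nonneg (by linarith) (by positivity)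
    have hsinh := sinh_le_mul_cosh (mul_nonneg hL (hSpos θ).le)
    have hcosh : cosh (L * S θ) ≤ K * exp (m * θ) := by
      refine (cosh_le_cosh.2 ?_).trans (cosh_add_le_cosh_mul_exp _ (mul_nonneg hm0 hθ.1))
      rw [abs_of_nonneg (mul_nonneg hL (hSpos θ).le),
        abs_of_nonneg (add_nonneg (by positivity) (mul_nonneg hm0 hθ.1))]
      have := sqrt_quadratic_le ha.le hc.le hdisc.le hθ.1
      simp only [m]
      nlinarith
    have hm : m * m = L ^ 2 * a := by simp only [m]; nlinarith [sq_sqrt ha.le]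
    calc cosh (L * S θ) * (L * S' θ) * (L * S' θ) + sinh (L * S θ) * (L * S'' θ)
        ≤ cosh (L * S θ) * (L * S' θ) * (L * S' θ) + L * S θ * cosh (L * S θ) * (L * S'' θ) :=
          by gcongr
      _ = L ^ 2 * a * cosh (L * S θ) := by rw [← hSS θ]; ring
      _ ≤ L ^ 2 * a * (K * exp (m * θ)) := by gcongr
      _ = exp (m * θ) * m * m * K := by rw [← hm]; ring
  have := image_le_of_second_deriv_le hf hf' hg hg' (by simp [hS0, K])
    (le_of_eq (by simp [hS0, S', K]; ring)) hle 1 (right_mem_Icc.2 zero_le_one)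
  simpa [S, K, m] using this

theorem cosh_mul_sqrt_quadratic_le_of_discrim_nonpos {L : ℝ} (hL : 0 ≤ L) (hc : 0 < c)
    (hdisc : b ^ 2 ≤ 4 * a * c) :
    cosh (L * √(a + b + c)) ≤ cosh (L * √c) + L * b / (2 * √c) * sinh (L * √c)
      + (exp (L * √a) - 1 - L * √a) * cosh (L * √c) := by
  have ha : 0 ≤ a := by nlinarith [sq_nonneg b]
  -- Perturb `a` and `c` to make the discriminant negative, then let the perturbation vanish.
  have hsc : √(c + 0) ≠ 0 := (sqrt_pos.2 (by simpa using hc)).ne'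
  set G : ℝ → ℝ := fun ε => cosh (L * √(c + ε)) + L * b / (2 * √(c + ε)) * sinh (L * √(c + ε))
    + (exp (L * √(a + ε)) - 1 - L * √(a + ε)) * cosh (L * √(c + ε)) with hG_def
  have hF : Continuous fun ε : ℝ => cosh (L * √((a + ε) + b + (c + ε))) := by fun_prop
  have hG : ContinuousAt G 0 := by fun_prop (disch := simpa using hsc)
  have hle : ∀ᶠ ε in 𝓝[>] 0, cosh (L * √((a + ε) + b + (c + ε))) ≤ G ε := by
    filter_upwards [self_mem_nhdsWithin] with ε (hε : 0 < ε)
    exact cosh_mul_sqrt_quadratic_le hL (by positivity) (by nlinarith)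
  simpa [hG_def] using le_of_tendsto_of_tendsto ((hF.tendsto 0).mono_left nhdsWithin_le_nhds)
    (hG.tendsto.mono_left nhdsWithin_le_nhds) hle

end QuadraticRoot

theorem cosh_norm_add_le {E : Type*} [NormedAddCommGroup E] [InnerProductSpace ℝ E]
    {L : ℝ} (hL : 0 ≤ L) (s x : E) :
    cosh (L * ‖s + x‖) ≤ cosh (L * ‖s‖) + L * sinh (L * ‖s‖) / ‖s‖ * inner ℝ s x
      + (exp (L * ‖x‖) - 1 - L * ‖x‖) * cosh (L * ‖s‖) := by
  rcases eq_or_ne s 0 with rfl | hs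
  · have := self_le_sinh_iff.2 (mul_nonneg hL (norm_nonneg x))
    have := cosh_add_sinh (L * ‖x‖)
    simp only [zero_add, norm_zero, mul_zero, cosh_zero, sinh_zero, zero_div, zero_mul, mul_one]
    linarith
  have hs' : 0 < ‖s‖ := norm_pos_iff.2 hs
  have hdisc : (2 * inner ℝ s x) ^ 2 ≤ 4 * ‖x‖ ^ 2 * ‖s‖ ^ 2 := by
    nlinarith [abs_real_inner_le_norm s x, abs_nonneg (inner ℝ s x), sq_abs (inner ℝ s x),
      norm_nonneg s, norm_nonneg x]
  have h := cosh_mul_sqrt_quadratic_le_of_discrim_nonpos hL (by positivity) hdisc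
  have hsum : ‖x‖ ^ 2 + 2 * inner ℝ s x + ‖s‖ ^ 2 = ‖s + x‖ ^ 2 := by
    rw [norm_add_sq_real]; ring
  rw [sqrt_sq (norm_nonneg _), sqrt_sq (norm_nonneg _), hsum, sqrt_sq (norm_nonneg _)] at h
  convert h using 2
  field_simp

theorem exp_sub_one_sub_le {x : ℝ} (hx0 : 0 ≤ x) (hx1 : x ≤ 1) :
    exp x - 1 - x ≤ 3 / 4 * x ^ 2 := by
  have h := exp_bound (n := 2) (by rwa [abs_of_nonneg hx0]) two_pos
  norm_num [Finset.sum_range_succ, abs_of_nonneg hx0] at h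
  linarith [(abs_le.1 h).2]

theorem lintegral_ofReal_cosh_norm_add_le {Ω E : Type*} [MeasurableSpace Ω] {μ : Measure Ω}
    [IsProbabilityMeasure μ] [NormedAddCommGroup E] [InnerProductSpace ℝ E] [CompleteSpace E]
    {X : Ω → E} (hX : AEStronglyMeasurable X μ) {B L : ℝ} (hL : 0 ≤ L) (hLB : L * B ≤ 1)
    (hbound : ∀ᵐ ω ∂μ, ‖X ω‖ ≤ B) (hmean : ∫ ω, X ω ∂μ = 0) (t : E) :
    ∫⁻ ω, ENNReal.ofReal (cosh (L * ‖t + X ω‖)) ∂μ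
      ≤ ENNReal.ofReal (cosh (L * ‖t‖) * exp (3 / 4 * L ^ 2 * ∫ ω, ‖X ω‖ ^ 2 ∂μ)) := by
  set C := cosh (L * ‖t‖)
  set D := L * sinh (L * ‖t‖) / ‖t‖
  have hXint : Integrable X μ := .of_bound hX B hbound
  have hX2int : Integrable (fun ω => ‖X ω‖ ^ 2) μ :=
    .of_bound (hX.norm.pow 2) (B ^ 2) <| hbound.mono fun ω hω => by
      rw [norm_pow, norm_norm]; exact pow_le_pow_left₀ (norm_nonneg _) hω 2
  have hLinint : Integrable (fun ω => C + D * inner ℝ t (X ω)) μ :=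
    (integrable_const C).add ((hXint.const_inner t).const_mul D)
  have hRint : Integrable (fun ω => C + D * inner ℝ t (X ω) + 3 / 4 * L ^ 2 * C * ‖X ω‖ ^ 2) μ :=
    hLinint.add (hX2int.const_mul _)
  have hpointwise : ∀ᵐ ω ∂μ, cosh (L * ‖t + X ω‖)
      ≤ C + D * inner ℝ t (X ω) + 3 / 4 * L ^ 2 * C * ‖X ω‖ ^ 2 := by
    filter_upwards [hbound] with ω hω
    have hexp := exp_sub_one_sub_le (mul_nonneg hL (norm_nonneg (X ω)))
      ((mul_le_mul_of_nonneg_left hω hL).trans hLB)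
    have := mul_le_mul_of_nonneg_right hexp (cosh_pos (L * ‖t‖)).le
    have := cosh_norm_add_le hL t (X ω)
    simp only [C, D] at *
    nlinarith
  have hLint : Integrable (fun ω => cosh (L * ‖t + X ω‖)) μ := by
    refine hRint.mono' ((by fun_prop : Continuous fun x : E => cosh (L * ‖t + x‖))
      |>.comp_aestronglyMeasurable hX) ?_
    filter_upwards [hpointwise] with ω hω
    rwa [norm_of_nonneg (cosh_pos _).le]
  have hRintegral : ∫ ω, (C + D * inner ℝ t (X ω) + 3 / 4 * L ^ 2 * C * ‖X ω‖ ^ 2) ∂μ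
      = C * (1 + 3 / 4 * L ^ 2 * ∫ ω, ‖X ω‖ ^ 2 ∂μ) := by
    rw [integral_add hLinint (hX2int.const_mul _),
      integral_add (integrable_const C) ((hXint.const_inner t).const_mul D),
      integral_const_mul, integral_const_mul, integral_inner hXint, hmean, inner_zero_right]
    simp only [integral_const, probReal_univ, smul_eq_mul]
    ring
  rw [← ofReal_integral_eq_lintegral_ofReal hLint (.of_forall fun ω => (cosh_pos _).le)]
  refine ENNReal.ofReal_le_ofReal ((integral_mono_ae hLint hRint hpointwise).trans ?_)
  rw [hRintegral]
  gcongr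
  linarith [add_one_le_exp (3 / 4 * L ^ 2 * ∫ ω, ‖X ω‖ ^ 2 ∂μ)]

theorem ProbabilityTheory.IndepFun.lintegral_comp_eq_lintegral_lintegral {Ω α β : Type*}
    [MeasurableSpace Ω] {μ : Measure Ω} [IsFiniteMeasure μ] [MeasurableSpace α]
    [MeasurableSpace β] {T : Ω → α} {X : Ω → β} (hT : Measurable T) (hX : Measurable X)
    (h : IndepFun T X μ) {f : α × β → ℝ≥0∞} (hf : Measurable f) :
    ∫⁻ ω, f (T ω, X ω) ∂μ = ∫⁻ a, ∫⁻ ω, f (a, X ω) ∂μ ∂(μ.map T) := by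
  rw [← lintegral_map hf (hT.prodMk hX),
    (indepFun_iff_map_prod_eq_prod_map_map hT.aemeasurable hX.aemeasurable).1 h,
    lintegral_prod _ hf.aemeasurable]
  exact lintegral_congr fun a => lintegral_map (hf.comp measurable_prodMk_left) hX

theorem lintegral_ofReal_cosh_norm_sum_le {Ω ι E : Type*} [MeasurableSpace Ω] {μ : Measure Ω}
    [IsProbabilityMeasure μ] [NormedAddCommGroup E] [InnerProductSpace ℝ E] [CompleteSpace E]
    [MeasurableSpace E] [BorelSpace E] [SecondCountableTopology E]
    {X : ι → Ω → E} (hX : ∀ i, Measurable (X i)) (hindep : iIndepFun X μ) {B L : ℝ}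
    (hL : 0 ≤ L) (hLB : L * B ≤ 1) (hbound : ∀ i, ∀ᵐ ω ∂μ, ‖X i ω‖ ≤ B)
    (hmean : ∀ i, ∫ ω, X i ω ∂μ = 0) (s : Finset ι) :
    ∫⁻ ω, ENNReal.ofReal (cosh (L * ‖∑ i ∈ s, X i ω‖)) ∂μ
      ≤ ENNReal.ofReal (exp (3 / 4 * L ^ 2 * ∑ i ∈ s, ∫ ω, ‖X i ω‖ ^ 2 ∂μ)) := by
  classical
  induction s using Finset.induction_on with
  | empty => simp
  | insert j s hj ih =>
    set V := ∫ ω, ‖X j ω‖ ^ 2 ∂μ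
    have hT : Measurable (∑ i ∈ s, X i) := by
      rw [Finset.sum_fn]; exact Finset.measurable_sum s fun i _ => hX i
    have hf : Measurable fun p : E × E => ENNReal.ofReal (cosh (L * ‖p.1 + p.2‖)) :=
      ENNReal.measurable_ofReal.comp (by fun_prop : Continuous _).measurable
    have hg : Measurable fun t : E => ENNReal.ofReal (cosh (L * ‖t‖)) :=
      ENNReal.measurable_ofReal.comp (by fun_prop : Continuous _).measurable
    calc ∫⁻ ω, ENNReal.ofReal (cosh (L * ‖∑ i ∈ insert j s, X i ω‖)) ∂μ
        = ∫⁻ ω, ENNReal.ofReal (cosh (L * ‖(∑ i ∈ s, X i) ω + X j ω‖)) ∂μ := by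
          simp_rw [Finset.sum_insert hj, Finset.sum_apply, add_comm (X j _)]
      _ = ∫⁻ t, ∫⁻ ω, ENNReal.ofReal (cosh (L * ‖t + X j ω‖)) ∂μ ∂(μ.map (∑ i ∈ s, X i)) :=
          (hindep.indepFun_finsetSum_of_notMem hX hj).lintegral_comp_eq_lintegral_lintegral hT
            (hX j) hf
      _ ≤ ∫⁻ t, ENNReal.ofReal (cosh (L * ‖t‖)) * ENNReal.ofReal (exp (3 / 4 * L ^ 2 * V))
            ∂(μ.map (∑ i ∈ s, X i)) := by
          refine lintegral_mono fun t => ?_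
          rw [← ENNReal.ofReal_mul (cosh_pos _).le]
          exact lintegral_ofReal_cosh_norm_add_le (hX j).aestronglyMeasurable hL hLB (hbound j)
            (hmean j) t
      _ = (∫⁻ ω, ENNReal.ofReal (cosh (L * ‖∑ i ∈ s, X i ω‖)) ∂μ)
            * ENNReal.ofReal (exp (3 / 4 * L ^ 2 * V)) := by
          rw [lintegral_mul_const _ hg, lintegral_map hg hT]
          simp_rw [Finset.sum_apply]
      _ ≤ ENNReal.ofReal (exp (3 / 4 * L ^ 2 * ∑ i ∈ s, ∫ ω, ‖X i ω‖ ^ 2 ∂μ))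
            * ENNReal.ofReal (exp (3 / 4 * L ^ 2 * V)) := by gcongr
      _ = ENNReal.ofReal (exp (3 / 4 * L ^ 2 * ∑ i ∈ insert j s, ∫ ω, ‖X i ω‖ ^ 2 ∂μ)) := by
          rw [← ENNReal.ofReal_mul (exp_pos _).le, ← exp_add, Finset.sum_insert hj, add_comm V]
          ring_nf

theorem two_le_exp_add_exp {y : ℝ} (hy : 2 ≤ y) :
    2 ≤ exp (1 / 4 + 3 / 16 * y) + exp (1 / 4 - 13 / 16 * y) := by
  have hsnd := (exp_pos (1 / 4 - 13 / 16 * y)).le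
  rcases le_or_gt (12 / 5) y with hy' | hy'
  · have h2 : 2 ≤ exp (7 / 10) := (log_le_iff_le_exp two_pos).1 (by linarith [log_two_lt_d9])
    linarith [exp_le_exp.2 (by linarith : (7 / 10 : ℝ) ≤ 1 / 4 + 3 / 16 * y)]
  · have h58 : (183 / 100 : ℝ) ≤ exp (5 / 8) := by
      have := sum_le_exp_of_nonneg (by norm_num : (0 : ℝ) ≤ 5 / 8) 4
      norm_num [Finset.sum_range_succ, Nat.factorial] at this
      linarith
    have h1710 : (17 / 100 : ℝ) ≤ exp (-(17 / 10)) := by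
      have he2 : exp 2 < 7.39 := by
        rw [show (2 : ℝ) = 1 + 1 by norm_num, exp_add]
        nlinarith [exp_one_lt_d9, exp_pos 1]
      rw [show -(17 / 10 : ℝ) = 3 / 10 - 2 by norm_num, exp_sub, le_div_iff₀ (exp_pos 2)]
      nlinarith [add_one_le_exp (3 / 10 : ℝ)]
    linarith [exp_le_exp.2 (by linarith : (5 / 8 : ℝ) ≤ 1 / 4 + 3 / 16 * y),
      exp_le_exp.2 (by linarith : -(17 / 10 : ℝ) ≤ 1 / 4 - 13 / 16 * y)]

theorem exp_div_cosh_le {y : ℝ} (hy : 2 ≤ y) :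
    exp (3 / 16 * y) / cosh (y / 2) ≤ exp (1 / 4 - y / 8) := by
  rw [div_le_iff₀ (cosh_pos _), cosh_eq, mul_div_assoc', mul_add, ← exp_add, ← exp_add,
    le_div_iff₀ two_pos]
  have := mul_le_mul_of_nonneg_right (two_le_exp_add_exp hy) (exp_pos (3 / 16 * y)).le
  rw [add_mul, ← exp_add, ← exp_add] at this
  have e1 : 1 / 4 + 3 / 16 * y + 3 / 16 * y = 1 / 4 - y / 8 + y / 2 := by ring
  have e2 : 1 / 4 - 13 / 16 * y + 3 / 16 * y = 1 / 4 - y / 8 + -(y / 2) := by ring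
  rw [e1, e2] at this
  linarith

section Tail

variable {Ω ι E : Type*} [MeasurableSpace Ω] {μ : Measure Ω} [IsProbabilityMeasure μ] [Fintype ι]
  [NormedAddCommGroup E] [InnerProductSpace ℝ E] [CompleteSpace E] [MeasurableSpace E]
  [BorelSpace E] [SecondCountableTopology E] {X : ι → Ω → E} {B : ℝ}

theorem measure_norm_sum_gt_le_exp_div_cosh (hX : ∀ i, Measurable (X i))
    (hindep : iIndepFun X μ) {L : ℝ} (hL : 0 ≤ L) (hLB : L * B ≤ 1)
    (hbound : ∀ i, ∀ᵐ ω ∂μ, ‖X i ω‖ ≤ B) (hmean : ∀ i, ∫ ω, X i ω ∂μ = 0) {t : ℝ} (ht : 0 ≤ t) :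
    μ {ω | t < ‖∑ i, X i ω‖}
      ≤ ENNReal.ofReal (exp (3 / 4 * L ^ 2 * ∑ i, ∫ ω, ‖X i ω‖ ^ 2 ∂μ) / cosh (L * t)) := by
  have hS : Measurable fun ω => ENNReal.ofReal (cosh (L * ‖∑ i, X i ω‖)) := by
    refine ENNReal.measurable_ofReal.comp ((by fun_prop : Continuous fun x : E => cosh (L * ‖x‖))
      |>.measurable.comp ?_)
    exact Finset.measurable_sum _ fun i _ => hX i
  calc μ {ω | t < ‖∑ i, X i ω‖}
      ≤ μ {ω | ENNReal.ofReal (cosh (L * t)) ≤ ENNReal.ofReal (cosh (L * ‖∑ i, X i ω‖))} := by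
        refine measure_mono fun ω (hω : t < _) => ENNReal.ofReal_le_ofReal (cosh_le_cosh.2 ?_)
        rw [abs_of_nonneg (by positivity), abs_of_nonneg (by positivity)]
        exact mul_le_mul_of_nonneg_left hω.le hL
    _ ≤ (∫⁻ ω, ENNReal.ofReal (cosh (L * ‖∑ i, X i ω‖)) ∂μ) / ENNReal.ofReal (cosh (L * t)) :=
        meas_ge_le_lintegral_div hS.aemeasurable (by simp [cosh_pos]) ENNReal.ofReal_ne_top
    _ ≤ _ := by
        rw [ENNReal.ofReal_div_of_pos (cosh_pos _)]
        gcongr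
        exact lintegral_ofReal_cosh_norm_sum_le hX hindep hL hLB hbound hmean _

theorem measure_norm_sum_gt_le (hX : ∀ i, Measurable (X i)) (hindep : iIndepFun X μ)
    (hB : 0 < B) (hbound : ∀ i, ∀ᵐ ω ∂μ, ‖X i ω‖ ≤ B) (hmean : ∀ i, ∫ ω, X i ω ∂μ = 0)
    {σ2 t : ℝ} (hσ2 : σ2 = ∑ i, ∫ ω, ‖X i ω‖ ^ 2 ∂μ) (ht0 : 0 ≤ t) (ht : t ≤ σ2 / B) :
    μ {ω | t < ‖∑ i, X i ω‖} ≤ ENNReal.ofReal (exp (-(t ^ 2) / (8 * σ2) + 1 / 4)) := by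
  have hσ0 : 0 ≤ σ2 := hσ2 ▸ Finset.sum_nonneg fun i _ => integral_nonneg fun ω => by positivity
  rcases le_or_gt (t ^ 2) (2 * σ2) with hsmall | hlarge
  · refine prob_le_one.trans (ENNReal.one_le_ofReal.2 (one_le_exp ?_))
    rcases hσ0.eq_or_lt with h0 | hpos
    · simp [← h0]
    · have : t ^ 2 / (8 * σ2) ≤ 1 / 4 := by rw [div_le_iff₀ (by positivity)]; linarith
      rw [neg_div]
      linarith
  have hσ : 0 < σ2 := by
    refine hσ0.lt_of_ne fun h0 => ?_
    rw [← h0, zero_div] at ht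
    nlinarith
  have htpos : 0 < t := by nlinarith
  refine (measure_norm_sum_gt_le_exp_div_cosh hX hindep (L := t / (2 * σ2)) (by positivity) ?_
    hbound hmean ht0).trans (ENNReal.ofReal_le_ofReal ?_)
  · rw [div_mul_eq_mul_div, div_le_one (by positivity)]
    rw [le_div_iff₀ hB] at ht
    nlinarith
  · have hy : 2 ≤ t ^ 2 / σ2 := by rw [le_div_iff₀ hσ]; linarith
    have e1 : 3 / 4 * (t / (2 * σ2)) ^ 2 * σ2 = 3 / 16 * (t ^ 2 / σ2) := by field_simp; ring
    have e2 : t / (2 * σ2) * t = t ^ 2 / σ2 / 2 := by field_simp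
    have e3 : -(t ^ 2) / (8 * σ2) + 1 / 4 = 1 / 4 - t ^ 2 / σ2 / 8 := by ring
    rw [← hσ2, e1, e2, e3]
    exact exp_div_cosh_le hy

end Tail

/-- Vector Bernstein inequality (Candès–Plan form): for independent random vectors
`v i` in `ℝ^k` with centered norms bounded by `B` a.s. and total variance `σ²`,
`P(‖Σ (v_i - E v_i)‖ > t) ≤ exp(-t²/(8σ²) + 1/4)` for `0 ≤ t ≤ σ²/B`. -/
theorem stmt_14 {Ω : Type*} [MeasurableSpace Ω] (μ : Measure Ω) [IsProbabilityMeasure μ]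
    (N k : ℕ) (v : Fin N → Ω → EuclideanSpace ℝ (Fin k))
    (hmeas : ∀ i, Measurable (v i))
    (hint : ∀ i, Integrable (v i) μ)
    (hindep : iIndepFun v μ)
    (B : ℝ) (hB : 0 < B)
    (hbound : ∀ i, ∀ᵐ ω ∂μ, ‖v i ω - ∫ ω', v i ω' ∂μ‖ ≤ B)
    (σ2 : ℝ) (hσ2 : σ2 = ∑ i, ∫ ω, ‖v i ω - ∫ ω', v i ω' ∂μ‖ ^ 2 ∂μ)
    (t : ℝ) (ht0 : 0 ≤ t) (ht : t ≤ σ2 / B) :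
    μ {ω | ‖∑ i, (v i ω - ∫ ω', v i ω' ∂μ)‖ > t} ≤
      ENNReal.ofReal (Real.exp (-(t ^ 2) / (8 * σ2) + 1 / 4)) := by
  have hmean i : ∫ ω, (v i ω - ∫ ω', v i ω' ∂μ) ∂μ = 0 := by
    rw [integral_sub (hint i) (integrable_const _), integral_const, probReal_univ, one_smul,
      sub_self]
  exact measure_norm_sum_gt_le (X := fun i ω => v i ω - ∫ ω', v i ω' ∂μ)
    (fun i => (hmeas i).sub_const _)
    (hindep.comp (fun i y => y - ∫ ω', v i ω' ∂μ) fun i => measurable_id.sub_const _)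
    hB hbound hmean hσ2 ht0 ht
end
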